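/- Fix a matroid (J,F) of rank k on J = {1,...,n}, m ≥ 1 and l ≥ 1, and a strong (mk+l)-system T. Then the unique minimal element A_min(T) of G(T) = {B ⊆ supp T : Σ_{j∈B} T(j) = l + m·r(B)} equals A_dec(T) := {b ∈ J : there is a strong decomposition T = T^{(1)}+...+T^{(m+1)} with b ∈ supp T^{(m+1)}}. -/
import Mathlib


/-- A matroid in the sense of the paper. -/
structure PaperMatroid (α : Type*) [DecidableEq α] [Fintype α] where
  Indep : Finset α → Prop
  nonempty : ∃ I, Indep I
  subset_closed : ∀ ⦃I J : Finset α⦄, Indep I → J ⊆ I → Indep J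
  max_card_eq : ∀ (A I₁ I₂ : Finset α),
    I₁ ⊆ A → Indep I₁ → (∀ J, J ⊆ A → Indep J → I₁ ⊆ J → J = I₁) →
    I₂ ⊆ A → Indep I₂ → (∀ J, J ⊆ A → Indep J → I₂ ⊆ J → J = I₂) →
    I₁.card = I₂.card

/-- `I` is a maximal independent subset of `A`. -/
def PaperMatroid.MaxIndepIn {α : Type*} [DecidableEq α] [Fintype α]
    (M : PaperMatroid α) (A I : Finset α) : Prop :=
  I ⊆ A ∧ M.Indep I ∧ ∀ J, J ⊆ A → M.Indep J → I ⊆ J → J = I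

/-- The support of a system `T : Fin n → ℕ`. -/
def suppSys {n : ℕ} (T : Fin n → ℕ) : Finset (Fin n) :=
  Finset.univ.filter (fun j => T j ≠ 0)

/-- The indicator system `[j]`. -/
def indSys {n : ℕ} (j : Fin n) : Fin n → ℕ := fun i => if i = j then 1 else 0

/-- A base of the rank-`k` matroid `(J,F)`: a `k`-system with values in `{0,1}`
whose support is independent. -/
def IsBaseSys {n : ℕ} (M : PaperMatroid (Fin n)) (k : ℕ) (T : Fin n → ℕ) : Prop :=
  M.Indep (suppSys T) ∧ (∀ j, T j ≤ 1) ∧ ∑ j, T j = k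

/-- `T` decomposes as a sum of `m` bases and the system `last`. -/
def StrongDecompWith {n : ℕ} (M : PaperMatroid (Fin n)) (k m : ℕ)
    (T last : Fin n → ℕ) : Prop :=
  ∃ B : Fin m → (Fin n → ℕ), (∀ i, IsBaseSys M k (B i)) ∧ T = (∑ i, B i) + last

/-- `T` is a strong `(mk+l)`-system: it is an `(mk+l)`-system admitting a strong
decomposition into `m` bases and an `l`-system. -/
def IsStrongSys {n : ℕ} (M : PaperMatroid (Fin n)) (k m l : ℕ) (T : Fin n → ℕ) : Prop :=
  (∑ j, T j = m * k + l) ∧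
  ∃ last : Fin n → ℕ, (∑ j, last j = l) ∧ StrongDecompWith M k m T last
namespace PaperMatroid

variable {α : Type*} [DecidableEq α] [Fintype α] (M : PaperMatroid α)

lemma exists_max_aux : ∀ (d : ℕ) (A I : Finset α), M.Indep I → I ⊆ A →
    A.card - I.card ≤ d → ∃ J, I ⊆ J ∧ M.MaxIndepIn A J := by
  intro d
  induction d with
  | zero =>
    intro A I hI hIA hcard
    refine ⟨I, subset_rfl, hIA, hI, fun J hJA hJ hIJ => ?_⟩
    have h1 : J.card ≤ A.card := Finset.card_le_card hJA
    have h2 : I.card ≤ J.card := Finset.card_le_card hIJ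
    exact (Finset.eq_of_subset_of_card_le hIJ (by omega)).symm
  | succ d ih =>
    intro A I hI hIA hcard
    by_cases h : ∀ J, J ⊆ A → M.Indep J → I ⊆ J → J = I
    · exact ⟨I, subset_rfl, hIA, hI, h⟩
    · push_neg at h
      obtain ⟨J, hJA, hJ, hIJ, hne⟩ := h
      have hlt : I.card < J.card := Finset.card_lt_card (lt_of_le_of_ne hIJ (Ne.symm hne))
      have hJAc : J.card ≤ A.card := Finset.card_le_card hJA
      obtain ⟨K, hJK, hK⟩ := ih A J hJ hJA (by omega)
      exact ⟨K, hIJ.trans hJK, hK⟩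

lemma exists_maxIndepIn_superset (A I : Finset α) (hI : M.Indep I) (hIA : I ⊆ A) :
    ∃ J, I ⊆ J ∧ M.MaxIndepIn A J :=
  M.exists_max_aux (A.card - I.card) A I hI hIA le_rfl

lemma card_le_r (r : Finset α → ℕ) (hr : ∀ A I, M.MaxIndepIn A I → I.card = r A)
    {A I : Finset α} (hI : M.Indep I) (hIA : I ⊆ A) : I.card ≤ r A := by
  obtain ⟨J, hIJ, hJ⟩ := M.exists_maxIndepIn_superset A I hI hIA
  have := hr A J hJ
  exact this ▸ Finset.card_le_card hIJ

/-- Circuit: a minimal dependent set. -/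
def IsCircuit (C : Finset α) : Prop :=
  ¬ M.Indep C ∧ ∀ x ∈ C, M.Indep (C.erase x)

lemma exists_circuit_aux : ∀ (d : ℕ) (S : Finset α), ¬ M.Indep S → S.card ≤ d →
    ∃ C ⊆ S, M.IsCircuit C := by
  intro d
  induction d with
  | zero =>
    intro S hS hcard
    have : S = ∅ := Finset.card_eq_zero.mp (by omega)
    subst this
    obtain ⟨I, hI⟩ := M.nonempty
    exact absurd (M.subset_closed hI (Finset.empty_subset I)) hS
  | succ d ih =>
    intro S hS hcard
    by_cases h : ∀ x ∈ S, M.Indep (S.erase x)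
    · exact ⟨S, subset_rfl, hS, h⟩
    · push_neg at h
      obtain ⟨x, hxS, hx⟩ := h
      have : (S.erase x).card ≤ d := by
        have := Finset.card_erase_of_mem hxS
        omega
      obtain ⟨C, hCS, hC⟩ := ih (S.erase x) hx this
      exact ⟨C, hCS.trans (Finset.erase_subset _ _), hC⟩

lemma exists_circuit {S : Finset α} (hS : ¬ M.Indep S) : ∃ C ⊆ S, M.IsCircuit C :=
  M.exists_circuit_aux S.card S hS le_rfl

lemma circuit_eq_of_subset {C₁ C₂ : Finset α} (h₁ : M.IsCircuit C₁) (h₂ : M.IsCircuit C₂)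
    (h : C₁ ⊆ C₂) : C₁ = C₂ := by
  by_contra hne
  obtain ⟨x, hx₂, hx₁⟩ := Finset.exists_of_ssubset (lt_of_le_of_ne h hne)
  have : C₁ ⊆ C₂.erase x := fun y hy => Finset.mem_erase.mpr ⟨fun hxy => hx₁ (hxy ▸ hy), h hy⟩
  exact h₁.1 (M.subset_closed (h₂.2 x hx₂) this)

lemma maxIndepIn_circuit_erase {C : Finset α} (hC : M.IsCircuit C) {x : α} (hx : x ∈ C) :
    M.MaxIndepIn C (C.erase x) := by
  refine ⟨Finset.erase_subset _ _, hC.2 x hx, fun J hJC hJ hsub => ?_⟩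
  by_cases hxJ : x ∈ J
  · exfalso
    have : C ⊆ J := fun y hy => by
      by_cases hyx : y = x
      · exact hyx ▸ hxJ
      · exact hsub (Finset.mem_erase.mpr ⟨hyx, hy⟩)
    exact hC.1 (M.subset_closed hJ this)
  · exact subset_antisymm (fun y hy => Finset.mem_erase.mpr ⟨fun h => hxJ (by rwa [h] at hy), hJC hy⟩) hsub

/-- circuit elimination (weak form). -/
lemma circuit_elim (r : Finset α → ℕ) (hr : ∀ A I, M.MaxIndepIn A I → I.card = r A)
    {C₁ C₂ : Finset α} (h₁ : M.IsCircuit C₁) (h₂ : M.IsCircuit C₂) (hne : C₁ ≠ C₂)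
    {e : α} (he₁ : e ∈ C₁) (he₂ : e ∈ C₂) : ¬ M.Indep ((C₁ ∪ C₂).erase e) := by
  intro hInd
  -- a ∈ C₁ \ C₂
  have hnsub : ¬ C₁ ⊆ C₂ := fun h => hne (M.circuit_eq_of_subset h₁ h₂ h)
  obtain ⟨a, ha₁, ha₂⟩ := Finset.not_subset.mp hnsub
  -- I₀ = C₁ ∩ C₂ indep
  have hI₀ : M.Indep (C₁ ∩ C₂) := by
    refine M.subset_closed (h₁.2 a ha₁) (fun y hy => ?_)
    have hy' := Finset.mem_inter.mp hy
    exact Finset.mem_erase.mpr ⟨fun h => ha₂ (h ▸ hy'.2), hy'.1⟩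
  obtain ⟨I₁, hI₀₁, hI₁⟩ := M.exists_maxIndepIn_superset C₁ (C₁ ∩ C₂) hI₀
    Finset.inter_subset_left
  have hrC₁ : I₁.card = r C₁ := hr _ _ hI₁
  have hrC₁' : (C₁.erase e).card = r C₁ := hr _ _ (M.maxIndepIn_circuit_erase h₁ he₁)
  have hC₁pos : 0 < C₁.card := Finset.card_pos.mpr ⟨e, he₁⟩
  have hI₁card : I₁.card = C₁.card - 1 := by
    have := Finset.card_erase_of_mem he₁; omega
  obtain ⟨I₂, hI₁₂, hI₂⟩ := M.exists_maxIndepIn_superset (C₁ ∪ C₂) I₁ hI₁.2.1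
    (hI₁.1.trans Finset.subset_union_left)
  have hrU : I₂.card = r (C₁ ∪ C₂) := hr _ _ hI₂
  -- I₂ ∩ C₁ = I₁
  have hIC : I₂ ∩ C₁ = I₁ := hI₁.2.2 (I₂ ∩ C₁) Finset.inter_subset_right
    (M.subset_closed hI₂.2.1 Finset.inter_subset_left)
    (Finset.subset_inter hI₁₂ hI₁.1)
  -- a' ∈ C₁ \ I₂ with a' ∉ C₂
  have hI₁ssub : I₁ ⊂ C₁ := Finset.ssubset_iff_of_subset hI₁.1 |>.mpr (by
    by_contra h
    push_neg at h
    have : C₁ ⊆ I₁ := h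
    exact h₁.1 (M.subset_closed hI₁.2.1 (by
      intro y hy; exact this hy)))
  obtain ⟨a', ha'C₁, ha'I₁⟩ := Finset.exists_of_ssubset hI₁ssub
  have ha'C₂ : a' ∉ C₂ := fun h => ha'I₁ (hI₀₁ (Finset.mem_inter.mpr ⟨ha'C₁, h⟩))
  have ha'I₂ : a' ∉ I₂ := fun h => ha'I₁ (hIC ▸ Finset.mem_inter.mpr ⟨h, ha'C₁⟩)
  -- b ∈ C₂ \ I₂
  have hnsub₂ : ¬ C₂ ⊆ I₂ := fun h => h₂.1 (M.subset_closed hI₂.2.1 h)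
  obtain ⟨b, hbC₂, hbI₂⟩ := Finset.not_subset.mp hnsub₂
  have hab : a' ≠ b := fun h => ha'C₂ (h ▸ hbC₂)
  -- card bound
  have hsub2 : I₂ ⊆ ((C₁ ∪ C₂).erase a').erase b := by
    intro y hy
    refine Finset.mem_erase.mpr ⟨fun h => hbI₂ (h ▸ hy), Finset.mem_erase.mpr
      ⟨fun h => ha'I₂ (h ▸ hy), hI₂.1 hy⟩⟩
  have hcard2 : I₂.card ≤ (C₁ ∪ C₂).card - 2 := by
    have h1 := Finset.card_le_card hsub2
    have h2 : ((C₁ ∪ C₂).erase a').card = (C₁ ∪ C₂).card - 1 :=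
      Finset.card_erase_of_mem (Finset.mem_union_left _ ha'C₁)
    have h3 : b ∈ (C₁ ∪ C₂).erase a' :=
      Finset.mem_erase.mpr ⟨hab.symm, Finset.mem_union_right _ hbC₂⟩
    have h4 := Finset.card_erase_of_mem h3
    omega
  -- the erase is indep of card |∪| - 1 ≤ r(∪)
  have hbig : ((C₁ ∪ C₂).erase e).card ≤ r (C₁ ∪ C₂) :=
    M.card_le_r r hr hInd (Finset.erase_subset _ _)
  have he : e ∈ C₁ ∪ C₂ := Finset.mem_union_left _ he₁
  have h5 := Finset.card_erase_of_mem he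
  have h6 : 0 < (C₁ ∪ C₂).card := Finset.card_pos.mpr ⟨e, he⟩
  have h7 : 2 ≤ (C₁ ∪ C₂).card := by
    have : ({a', b} : Finset α) ⊆ C₁ ∪ C₂ := by
      intro y hy
      rcases Finset.mem_insert.mp hy with h | h
      · exact h ▸ Finset.mem_union_left _ ha'C₁
      · exact (Finset.mem_singleton.mp h) ▸ Finset.mem_union_right _ hbC₂
    have := Finset.card_le_card this
    rwa [Finset.card_insert_of_notMem (by simpa using hab), Finset.card_singleton] at this
  omega

end PaperMatroid
namespace PaperMatroid

variable {α : Type*} [DecidableEq α] [Fintype α] (M : PaperMatroid α)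

/-- Single exchange: if `C` is a circuit inside `I + x`, then for every `y ∈ C`,
`y ≠ x`, the set `I - y + x` is independent. -/
lemma indep_insert_erase (r : Finset α → ℕ) (hr : ∀ A I, M.MaxIndepIn A I → I.card = r A) {I C : Finset α} {x y : α} (hI : M.Indep I) (hx : x ∉ I)
    (hC : M.IsCircuit C) (hCsub : C ⊆ insert x I) (hy : y ∈ C) (hyx : y ≠ x) :
    M.Indep (insert x (I.erase y)) := by
  by_contra hdep
  obtain ⟨C', hC'sub, hC'⟩ := M.exists_circuit hdep
  have hxC : x ∈ C := by
    by_contra h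
    refine hC.1 (M.subset_closed hI (fun z hz => ?_))
    rcases Finset.mem_insert.mp (hCsub hz) with h' | h'
    · exact absurd (h' ▸ hz) h
    · exact h'
  have hxC' : x ∈ C' := by
    by_contra h
    refine hC'.1 (M.subset_closed hI (fun z hz => ?_))
    rcases Finset.mem_insert.mp (hC'sub hz) with h' | h'
    · exact absurd (h' ▸ hz) h
    · exact Finset.mem_of_mem_erase h'
  have hyC' : y ∉ C' := by
    intro h
    rcases Finset.mem_insert.mp (hC'sub h) with h' | h'
    · exact hyx h'
    · exact (Finset.mem_erase.mp h').1 rfl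
  have hne : C ≠ C' := fun h => hyC' (h ▸ hy)
  refine M.circuit_elim r hr hC hC' hne hxC hxC' (M.subset_closed hI (fun z hz => ?_))
  obtain ⟨hzx, hz⟩ := Finset.mem_erase.mp hz
  rcases Finset.mem_union.mp hz with h' | h'
  · rcases Finset.mem_insert.mp (hCsub h') with h'' | h''
    · exact absurd h'' hzx
    · exact h''
  · rcases Finset.mem_insert.mp (hC'sub h') with h'' | h''
    · exact absurd h'' hzx
    · exact Finset.mem_of_mem_erase h''

/-- Double exchange along a shortcut-free pair of arcs. -/
lemma double_exch (r : Finset α → ℕ) (hr : ∀ A I, M.MaxIndepIn A I → I.card = r A) {I : Finset α} {w z e v : α} (hI : M.Indep I)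
    (hw : w ∈ I) (hz : z ∈ I) (hwz : w ≠ z) (he : e ∉ I) (hv : v ∉ I) (hev : e ≠ v)
    (h1 : M.Indep (insert e (I.erase w)))
    (h2 : ¬ M.Indep (insert e (I.erase z)))
    (h3 : M.Indep (insert v (I.erase z))) :
    M.Indep (insert v (insert e ((I.erase w).erase z))) := by
  by_contra hdep
  obtain ⟨C', hC's, hC'⟩ := M.exists_circuit hdep
  obtain ⟨C'', hC''s, hC''⟩ := M.exists_circuit h2
  have heC' : e ∈ C' := by
    by_contra h
    refine hC'.1 (M.subset_closed h3 (fun u hu => ?_))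
    rcases Finset.mem_insert.mp (hC's hu) with h' | h'
    · exact h' ▸ Finset.mem_insert_self _ _
    · rcases Finset.mem_insert.mp h' with h'' | h''
      · exact absurd (h'' ▸ hu) h
      · exact Finset.mem_insert_of_mem (Finset.erase_subset_erase _ (Finset.erase_subset _ _) h'')
  have hvC' : v ∈ C' := by
    by_contra h
    refine hC'.1 (M.subset_closed h1 (fun u hu => ?_))
    rcases Finset.mem_insert.mp (hC's hu) with h' | h'
    · exact absurd (h' ▸ hu) h
    · rcases Finset.mem_insert.mp h' with h'' | h''
      · exact h'' ▸ Finset.mem_insert_self _ _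
      · exact Finset.mem_insert_of_mem (Finset.mem_of_mem_erase h'')
  have heC'' : e ∈ C'' := by
    by_contra h
    refine hC''.1 (M.subset_closed hI (fun u hu => ?_))
    rcases Finset.mem_insert.mp (hC''s hu) with h' | h'
    · exact absurd (h' ▸ hu) h
    · exact Finset.mem_of_mem_erase h'
  have hvC'' : v ∉ C'' := by
    intro h
    rcases Finset.mem_insert.mp (hC''s h) with h' | h'
    · exact hev h'.symm
    · exact hv (Finset.mem_of_mem_erase h')
  have hne : C' ≠ C'' := fun h => hvC'' (h ▸ hvC')
  refine M.circuit_elim r hr hC' hC'' hne heC' heC'' (M.subset_closed h3 (fun u hu => ?_))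
  obtain ⟨hue, hu⟩ := Finset.mem_erase.mp hu
  rcases Finset.mem_union.mp hu with h' | h'
  · rcases Finset.mem_insert.mp (hC's h') with h'' | h''
    · exact h'' ▸ Finset.mem_insert_self _ _
    · rcases Finset.mem_insert.mp h'' with h₃ | h₃
      · exact absurd h₃ hue
      · exact Finset.mem_insert_of_mem (Finset.erase_subset_erase _ (Finset.erase_subset _ _) h₃)
  · rcases Finset.mem_insert.mp (hC''s h') with h'' | h''
    · exact absurd h'' hue
    · exact Finset.mem_insert_of_mem h''

end PaperMatroid
section Decomp

variable {n k m l : ℕ} {M : PaperMatroid (Fin n)} {T : Fin n → ℕ}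

lemma mem_suppSys {T : Fin n → ℕ} {j : Fin n} : j ∈ suppSys T ↔ T j ≠ 0 := by
  simp [suppSys]

/-- A bundled strong decomposition. -/
structure Dcmp (M : PaperMatroid (Fin n)) (k m l : ℕ) (T : Fin n → ℕ) where
  B : Fin m → (Fin n → ℕ)
  lst : Fin n → ℕ
  hB : ∀ i, IsBaseSys M k (B i)
  hlst : ∑ j, lst j = l
  hsum : T = (∑ i, B i) + lst

lemma Dcmp.pt (P : Dcmp M k m l T) (z : Fin n) :
    T z = (∑ i, P.B i z) + P.lst z := by
  conv_lhs => rw [P.hsum]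
  simp

/-- Exchange arcs between elements relative to a decomposition. -/
def Arc (P : Dcmp M k m l T) (x y : Fin n) : Prop :=
  ∃ i, P.B i x ≠ 0 ∧ P.B i y = 0 ∧ M.Indep (insert y ((suppSys (P.B i)).erase x))

def ArcPath (P : Dcmp M k m l T) : Fin n → List (Fin n) → Prop
  | _, [] => True
  | x, y :: L => Arc P x y ∧ ArcPath P y L

/-- A chain of arcs starting at `x` and ending at a point of the support of `lst`. -/
def ChainTo (P : Dcmp M k m l T) (x : Fin n) (L : List (Fin n)) : Prop :=
  ArcPath P x L ∧ P.lst (L.getLastD x) ≠ 0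

lemma arcPath_append {P : Dcmp M k m l T} {e : Fin n} :
    ∀ (L : List (Fin n)) (x : Fin n), ArcPath P x (L ++ [e]) ↔
      ArcPath P x L ∧ Arc P (L.getLastD x) e := by
  intro L
  induction L with
  | nil => intro x; simp [ArcPath]
  | cons y L ih =>
    intro x
    show (Arc P x y ∧ ArcPath P y (L ++ [e])) ↔ (Arc P x y ∧ ArcPath P y L) ∧ _
    rw [ih y, List.getLastD_cons, and_assoc]

def swapB (B : Fin n → ℕ) (w e : Fin n) : Fin n → ℕ :=
  fun z => if z = w then 0 else if z = e then 1 else B z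

def swapLst (lst : Fin n → ℕ) (w e : Fin n) : Fin n → ℕ :=
  fun z => if z = e then lst e - 1 else if z = w then lst w + 1 else lst z

lemma suppSys_swapB {B : Fin n → ℕ} {w e : Fin n} (hw : B w ≠ 0) (he : B e = 0) :
    suppSys (swapB B w e) = insert e ((suppSys B).erase w) := by
  have hwe : w ≠ e := fun h => hw (h ▸ he)
  ext z
  simp only [mem_suppSys, swapB, Finset.mem_insert, Finset.mem_erase, mem_suppSys]
  by_cases h1 : z = w
  · subst h1; simp [hwe]
  · by_cases h2 : z = e
    · subst h2; simp [h1]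
    · simp [h1, h2]

/-- The swap operation: move one unit of `w` from base `i` into the tail,
replacing it with `e` taken from the tail. -/
def Dcmp.swap (P : Dcmp M k m l T) (i : Fin m) (w e : Fin n)
    (hw : P.B i w ≠ 0) (he0 : P.B i e = 0)
    (hind : M.Indep (insert e ((suppSys (P.B i)).erase w)))
    (hle : P.lst e ≠ 0) : Dcmp M k m l T where
  B := Function.update P.B i (swapB (P.B i) w e)
  lst := swapLst P.lst w e
  hB := by
    intro j
    by_cases hji : j = i
    · subst hji
      rw [Function.update_self]
      obtain ⟨hbi, hb1, hbs⟩ := P.hB j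
      have hw1 : P.B j w = 1 := by have := hb1 w; omega
      have hwe : w ≠ e := fun h => hw (h ▸ he0)
      refine ⟨?_, ?_, ?_⟩
      · rw [suppSys_swapB hw he0]; exact hind
      · intro z
        simp only [swapB]
        by_cases h1 : z = w
        · rw [if_pos h1]; omega
        · rw [if_neg h1]
          by_cases h2 : z = e
          · rw [if_pos h2]
          · rw [if_neg h2]; exact hb1 z

      · have key : ∀ z, swapB (P.B j) w e z + (if z = w then 1 else 0)
            = P.B j z + (if z = e then 1 else 0) := by
          intro z
          by_cases h1 : z = w
          · have h2 : z ≠ e := fun h => hwe (h1.symm.trans h)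
            simp only [swapB, if_pos h1, if_neg h2]
            rw [h1, hw1]
          · by_cases h2 : z = e
            · simp only [swapB, if_neg h1, if_pos h2]
              rw [h2, he0]
            · simp only [swapB, if_neg h1, if_neg h2]
        calc ∑ z, swapB (P.B j) w e z
            = (∑ z, (swapB (P.B j) w e z + (if z = w then 1 else 0))) - 1 := by
              rw [Finset.sum_add_distrib, Finset.sum_ite_eq' Finset.univ w (fun _ => 1)]
              simp
          _ = (∑ z, (P.B j z + (if z = e then 1 else 0))) - 1 := by
              congr 1; exact Finset.sum_congr rfl (fun z _ => key z)
          _ = k := by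
              rw [Finset.sum_add_distrib, Finset.sum_ite_eq' Finset.univ e (fun _ => 1)]
              simp [hbs]
    · rw [Function.update_of_ne hji]; exact P.hB j
  hlst := by
    have hwe : e ≠ w := fun h => hw (h ▸ he0)
    have hle' : 1 ≤ P.lst e := Nat.one_le_iff_ne_zero.mpr hle
    have key : ∀ z, swapLst P.lst w e z + (if z = e then 1 else 0)
        = P.lst z + (if z = w then 1 else 0) := by
      intro z
      by_cases h1 : z = e
      · have h2 : z ≠ w := fun h => hwe (h1.symm.trans h)
        simp only [swapLst, if_pos h1, if_neg h2]
        rw [h1]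
        omega
      · by_cases h2 : z = w
        · simp only [swapLst, if_neg h1, if_pos h2]
          rw [h2]
        · simp only [swapLst, if_neg h1, if_neg h2]
    have h1 : (∑ z, swapLst P.lst w e z) + 1 = (∑ z, P.lst z) + 1 := by
      calc (∑ z, swapLst P.lst w e z) + 1
          = ∑ z, (swapLst P.lst w e z + (if z = e then 1 else 0)) := by
            rw [Finset.sum_add_distrib, Finset.sum_ite_eq' Finset.univ e (fun _ => 1)]
            simp
        _ = ∑ z, (P.lst z + (if z = w then 1 else 0)) := Finset.sum_congr rfl (fun z _ => key z)
        _ = (∑ z, P.lst z) + 1 := by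
            rw [Finset.sum_add_distrib, Finset.sum_ite_eq' Finset.univ w (fun _ => 1)]
            simp
    have := P.hlst
    omega
  hsum := by
    funext z
    have hpt := P.pt z
    have hsplit : ∀ (C : Fin m → (Fin n → ℕ)), (∑ i', C i') z = ∑ i', C i' z := by
      intro C; simp
    simp only [Pi.add_apply, hsplit]
    have hupd : ∑ i', Function.update P.B i (swapB (P.B i) w e) i' z
        = swapB (P.B i) w e z + ∑ i' ∈ Finset.univ.erase i, P.B i' z := by
      rw [← Finset.add_sum_erase _ _ (Finset.mem_univ i), Function.update_self]
      congr 1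
      exact Finset.sum_congr rfl (fun j hj => by
        rw [Function.update_of_ne (Finset.mem_erase.mp hj).1])
    have horig : (∑ i', P.B i' z) = P.B i z + ∑ i' ∈ Finset.univ.erase i, P.B i' z :=
      (Finset.add_sum_erase _ _ (Finset.mem_univ i)).symm
    rw [hupd]
    rw [horig] at hpt
    have hw1 : P.B i w = 1 := by have := (P.hB i).2.1 w; omega
    have hle' : 1 ≤ P.lst e := Nat.one_le_iff_ne_zero.mpr hle
    have hwe : w ≠ e := fun h => hw (h ▸ he0)
    by_cases h1 : z = e
    · have h2 : z ≠ w := fun h => hwe (h1.symm.trans h).symm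
      simp only [swapB, swapLst, if_pos h1, if_neg h2]
      rw [h1] at hpt ⊢
      rw [he0] at hpt
      omega
    · by_cases h2 : z = w
      · simp only [swapB, swapLst, if_pos h2, if_neg h1]
        rw [h2] at hpt ⊢
        rw [hw1] at hpt
        omega
      · simp only [swapB, swapLst, if_neg h1, if_neg h2]
        omega

end Decomp
section Claim1

variable {n k m l : ℕ} {M : PaperMatroid (Fin n)} {T : Fin n → ℕ}
variable (r : Finset (Fin n) → ℕ)

/-- Arcs along a shortcut-free path survive the swap at its far end. -/
lemma arc_swap_preserved (hr : ∀ A I, M.MaxIndepIn A I → I.card = r A)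
    (P : Dcmp M k m l T) (i : Fin m) (w e : Fin n)
    (hw : P.B i w ≠ 0) (he0 : P.B i e = 0)
    (hind : M.Indep (insert e ((suppSys (P.B i)).erase w)))
    (hle : P.lst e ≠ 0) :
    ∀ (L : List (Fin n)) (z : Fin n), ArcPath P z L → L.getLastD z = w →
      (∀ c, ChainTo P z c → L.length ≤ c.length) →
      ArcPath (P.swap i w e hw he0 hind hle) z L := by
  intro L
  induction L with
  | nil => intro z _ _ _; trivial
  | cons v L₃ ih =>
    intro z hpath hlastd hinv
    obtain ⟨hzv, hrest⟩ := hpath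
    have hlast' : L₃.getLastD v = w := by
      rw [List.getLastD_cons] at hlastd; exact hlastd
    have hinv' : ∀ c, ChainTo P v c → L₃.length ≤ c.length := by
      intro c hc
      have hch : ChainTo P z (v :: c) := ⟨⟨hzv, hc.1⟩, by
        rw [List.getLastD_cons]; exact hc.2⟩
      have := hinv (v :: c) hch
      simpa using this
    refine ⟨?_, ih v hrest hlast' hinv'⟩
    obtain ⟨i', hBz, hBv, hIzv⟩ := hzv
    by_cases hii : i' = i
    · subst hii
      have hIndI : M.Indep (suppSys (P.B i')) := (P.hB i').1
      have hzI : z ∈ suppSys (P.B i') := mem_suppSys.mpr hBz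
      have hvI : v ∉ suppSys (P.B i') := fun h => mem_suppSys.mp h hBv
      have heI : e ∉ suppSys (P.B i') := fun h => mem_suppSys.mp h he0
      have hwI : w ∈ suppSys (P.B i') := mem_suppSys.mpr hw
      have hkill : ∀ c, ChainTo P z c → c.length = 1 → L₃ = [] ∧ v = w := by
        intro c hc hc1
        have hlen := hinv c hc
        rw [hc1] at hlen
        have hL₃ : L₃ = [] := by
          have h2 : L₃.length + 1 ≤ 1 := by simpa using hlen
          exact List.eq_nil_of_length_eq_zero (by omega)
        refine ⟨hL₃, ?_⟩
        rw [hL₃] at hlast'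
        exact hlast'
      have hshort : ¬ M.Indep (insert e ((suppSys (P.B i')).erase z)) := by
        intro hstep
        have hch : ChainTo P z [e] := ⟨⟨⟨i', hBz, he0, hstep⟩, trivial⟩, by
          show P.lst e ≠ 0; exact hle⟩
        obtain ⟨_, hvw⟩ := hkill [e] hch rfl
        exact hw (hvw ▸ hBv)
      have hzw : z ≠ w := by
        rintro rfl
        exact hshort hind
      have hve : v ≠ e := by
        intro h
        have hch : ChainTo P z [v] := ⟨⟨⟨i', hBz, hBv, hIzv⟩, trivial⟩, by
          show P.lst v ≠ 0; rw [h]; exact hle⟩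
        obtain ⟨_, hvw⟩ := hkill [v] hch rfl
        rw [hvw] at h
        exact heI (h ▸ hwI)
      have hzE : z ≠ e := fun h => heI (h ▸ hzI)
      have hde := M.double_exch r hr hIndI hwI hzI (Ne.symm hzw) heI hvI (Ne.symm hve)
        hind hshort hIzv
      refine ⟨i', ?_, ?_, ?_⟩
      · show Function.update P.B i' (swapB (P.B i') w e) i' z ≠ 0
        rw [Function.update_self]
        simp only [swapB, if_neg hzw, if_neg hzE]
        exact hBz
      · show Function.update P.B i' (swapB (P.B i') w e) i' v = 0
        rw [Function.update_self]
        simp only [swapB]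
        by_cases hvw : v = w
        · rw [if_pos hvw]
        · rw [if_neg hvw, if_neg hve]; exact hBv
      · show M.Indep (insert v ((suppSys
          (Function.update P.B i' (swapB (P.B i') w e) i')).erase z))
        rw [Function.update_self, suppSys_swapB hw he0,
          Finset.erase_insert_of_ne (Ne.symm hzE)]
        exact hde
    · refine ⟨i', ?_, ?_, ?_⟩
      · show Function.update P.B i (swapB (P.B i) w e) i' z ≠ 0
        rw [Function.update_of_ne hii]; exact hBz
      · show Function.update P.B i (swapB (P.B i) w e) i' v = 0
        rw [Function.update_of_ne hii]; exact hBv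
      · show M.Indep (insert v ((suppSys
          (Function.update P.B i (swapB (P.B i) w e) i')).erase z))
        rw [Function.update_of_ne hii]; exact hIzv

/-- Claim 1: an element connected to the tail support by a chain of exchange arcs
is in the tail support of some decomposition. -/
lemma chain_gives_decomp (hr : ∀ A I, M.MaxIndepIn A I → I.card = r A) :
    ∀ (p : ℕ) (P : Dcmp M k m l T) (x : Fin n) (L : List (Fin n)),
      ChainTo P x L → L.length ≤ p → ∃ Q : Dcmp M k m l T, Q.lst x ≠ 0 := by
  intro p
  induction p with
  | zero =>
    intro P x L hL hlen
    have : L = [] := List.eq_nil_of_length_eq_zero (by omega)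
    subst this
    exact ⟨P, hL.2⟩
  | succ p ih =>
    intro P x L hL hlen
    by_cases hshort : ∃ L', ChainTo P x L' ∧ L'.length ≤ p
    · obtain ⟨L', h1, h2⟩ := hshort
      exact ih P x L' h1 h2
    · push_neg at hshort
      have Hmin : ∀ L', ChainTo P x L' → p + 1 ≤ L'.length := fun L' h => hshort L' h
      have hlen' : L.length = p + 1 := le_antisymm hlen (Hmin L hL)
      obtain ⟨L₁, e, rfl⟩ : ∃ L₁ e, L = L₁ ++ [e] := by
        rcases List.eq_nil_or_concat L with h | ⟨L₁, e, h⟩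
        · rw [h] at hlen'; simp at hlen'
        · exact ⟨L₁, e, by rw [h, List.concat_eq_append]⟩
      obtain ⟨hpath, hsink⟩ := hL
      rw [arcPath_append] at hpath
      obtain ⟨hpath₁, harc⟩ := hpath
      have hsink' : P.lst e ≠ 0 := by
        rwa [List.getLastD_concat] at hsink
      obtain ⟨i, hBw, hBe, hind⟩ := harc
      have hL₁len : L₁.length = p := by
        have := hlen'; simp at this; omega
      have hpath' : ArcPath (P.swap i (L₁.getLastD x) e hBw hBe hind hsink') x L₁ :=
        arc_swap_preserved r hr P i (L₁.getLastD x) e hBw hBe hind hsink' L₁ x hpath₁ rfl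
          (fun c hc => by have := Hmin c hc; omega)
      have hwE : L₁.getLastD x ≠ e := fun h => hBw (h ▸ hBe)
      have hchain' : ChainTo (P.swap i (L₁.getLastD x) e hBw hBe hind hsink') x L₁ := by
        refine ⟨hpath', ?_⟩
        show swapLst P.lst (L₁.getLastD x) e (L₁.getLastD x) ≠ 0
        simp only [swapLst]
        rw [if_neg hwE]
        simp only [if_true, eq_self_iff_true]
        omega
      exact ih _ x L₁ hchain' (by omega)

end Claim1
section Final

variable {n k m l : ℕ} {M : PaperMatroid (Fin n)} {T : Fin n → ℕ}

lemma sum_eq_card_inter {B : Fin n → ℕ} (hB1 : ∀ j, B j ≤ 1) (s : Finset (Fin n)) :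
    ∑ j ∈ s, B j = (suppSys B ∩ s).card := by
  have hfil : s.filter (fun j => B j ≠ 0) = suppSys B ∩ s := by
    ext j
    simp only [Finset.mem_filter, suppSys, Finset.mem_inter, Finset.mem_univ, true_and]
    tauto
  calc ∑ j ∈ s, B j = ∑ j ∈ s.filter (fun j => B j ≠ 0), B j :=
        (Finset.sum_filter_ne_zero s).symm
    _ = ∑ j ∈ suppSys B ∩ s, B j := by rw [hfil]
    _ = ∑ _j ∈ suppSys B ∩ s, 1 := Finset.sum_congr rfl (fun j hj => by
        have h1 := hB1 j
        have h2 : B j ≠ 0 := mem_suppSys.mp (Finset.mem_inter.mp hj).1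
        omega)
    _ = (suppSys B ∩ s).card := by simp

lemma Dcmp.sum_split (P : Dcmp M k m l T) (s : Finset (Fin n)) :
    ∑ j ∈ s, T j = (∑ i, (suppSys (P.B i) ∩ s).card) + ∑ j ∈ s, P.lst j := by
  calc ∑ j ∈ s, T j = ∑ j ∈ s, ((∑ i, P.B i j) + P.lst j) :=
        Finset.sum_congr rfl (fun j _ => P.pt j)
    _ = (∑ j ∈ s, ∑ i, P.B i j) + ∑ j ∈ s, P.lst j := Finset.sum_add_distrib
    _ = (∑ i, ∑ j ∈ s, P.B i j) + ∑ j ∈ s, P.lst j := by rw [Finset.sum_comm]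
    _ = (∑ i, (suppSys (P.B i) ∩ s).card) + ∑ j ∈ s, P.lst j := by
        congr 1
        exact Finset.sum_congr rfl (fun i _ => sum_eq_card_inter (P.hB i).2.1 s)

end Final

/-- For `l ≥ 1` and a strong `(mk+l)`-system `T`, the unique minimal element
`Amin(T)` of `G(T)` equals `A_dec(T)`, the set of `b ∈ J` appearing in the support
of the last summand of some strong decomposition of `T`. -/
theorem Amin_eq_Adec {n k m l : ℕ} (hn : 0 < n) (hk : 0 < k) (hm : 1 ≤ m) (hl : 1 ≤ l)
    (hnk : k ≤ n)
    (M : PaperMatroid (Fin n))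
    (r : Finset (Fin n) → ℕ)
    (hr : ∀ A I, M.MaxIndepIn A I → I.card = r A)
    (hrank : r Finset.univ = k)
    (T : Fin n → ℕ) (hT : IsStrongSys M k m l T)
    (G : Set (Finset (Fin n)))
    (hG : G = {B : Finset (Fin n) | B ⊆ suppSys T ∧ ∑ j ∈ B, T j = l + m * r B})
    (Amin : Finset (Fin n)) (hmemb : Amin ∈ G) (hmin : ∀ B ∈ G, Amin ⊆ B) :
    ∀ b : Fin n, b ∈ Amin ↔
      ∃ last : Fin n → ℕ, (∑ j, last j = l) ∧ StrongDecompWith M k m T last ∧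
        last b ≠ 0 := by
  classical
  rw [hG] at hmemb hmin
  simp only [Set.mem_setOf_eq] at hmemb
  obtain ⟨hAsub, hAeq⟩ := hmemb
  intro b
  -- Counting facts valid for every decomposition.
  have key : ∀ P : Dcmp M k m l T, (∀ j, j ∉ Amin → P.lst j = 0) ∧
      (∀ i, (suppSys (P.B i) ∩ Amin).card = r Amin) := by
    intro P
    have hsplit := P.sum_split Amin
    have hcardle : ∀ i, (suppSys (P.B i) ∩ Amin).card ≤ r Amin := fun i =>
      M.card_le_r r hr (M.subset_closed (P.hB i).1 Finset.inter_subset_left)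
        Finset.inter_subset_right
    have hlstle : ∑ j ∈ Amin, P.lst j ≤ l :=
      le_of_le_of_eq (Finset.sum_le_sum_of_subset (Finset.subset_univ Amin)) P.hlst
    have hsumle : (∑ i, (suppSys (P.B i) ∩ Amin).card) ≤ m * r Amin := by
      calc (∑ i, (suppSys (P.B i) ∩ Amin).card) ≤ ∑ _i : Fin m, r Amin :=
            Finset.sum_le_sum (fun i _ => hcardle i)
        _ = m * r Amin := by simp [Finset.sum_const, mul_comm]
    have hlst_eq : ∑ j ∈ Amin, P.lst j = l := by omega
    have hsum_eq : (∑ i, (suppSys (P.B i) ∩ Amin).card) = m * r Amin := by omega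
    constructor
    · intro j hj
      have hsd : ∑ j ∈ Finset.univ \ Amin, P.lst j + ∑ j ∈ Amin, P.lst j
          = ∑ j, P.lst j := Finset.sum_sdiff (Finset.subset_univ Amin)
      have h0 : ∑ j ∈ Finset.univ \ Amin, P.lst j = 0 := by
        have := P.hlst; omega
      exact Finset.sum_eq_zero_iff.mp h0 j (Finset.mem_sdiff.mpr ⟨Finset.mem_univ j, hj⟩)
    · intro i
      by_contra hne
      have hlt : (suppSys (P.B i) ∩ Amin).card < r Amin := lt_of_le_of_ne (hcardle i) hne
      have hstrict : (∑ i', (suppSys (P.B i') ∩ Amin).card) < m * r Amin := by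
        calc (∑ i', (suppSys (P.B i') ∩ Amin).card) < ∑ _i : Fin m, r Amin :=
              Finset.sum_lt_sum (fun i' _ => hcardle i') ⟨i, Finset.mem_univ i, hlt⟩
          _ = m * r Amin := by simp [Finset.sum_const, mul_comm]
      omega
  constructor
  · -- b ∈ Amin → reachable via the exchange graph → in the tail of some decomposition
    intro hb
    obtain ⟨hTsum, last₀, hlast₀, B₀, hB₀, hsum₀⟩ := hT
    set P₀ : Dcmp M k m l T := ⟨B₀, last₀, hB₀, hlast₀, hsum₀⟩ with hP₀
    set R : Finset (Fin n) := Amin.filter (fun x => ∃ L, ChainTo P₀ x L) with hR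
    have hkey := key P₀
    have hlstR : ∀ j, P₀.lst j ≠ 0 → j ∈ R := by
      intro j hj
      have hjA : j ∈ Amin := by
        by_contra h
        exact hj (hkey.1 j h)
      exact Finset.mem_filter.mpr ⟨hjA, ⟨[], trivial, hj⟩⟩
    have hmaxA : ∀ (i : Fin m) (x : Fin n), x ∈ Amin → P₀.B i x = 0 →
        ¬ M.Indep (insert x (suppSys (P₀.B i) ∩ Amin)) := by
      intro i x hx hx0 hindep
      have hIcard := hkey.2 i
      obtain ⟨J, hsubJ, hJ⟩ := M.exists_maxIndepIn_superset Amin (suppSys (P₀.B i) ∩ Amin)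
        (M.subset_closed (P₀.hB i).1 Finset.inter_subset_left) Finset.inter_subset_right
      have hJcard : J.card = r Amin := hr _ _ hJ
      have hJeq : J = suppSys (P₀.B i) ∩ Amin :=
        (Finset.eq_of_subset_of_card_le hsubJ (by omega)).symm
      have hxmem : x ∈ suppSys (P₀.B i) ∩ Amin := by
        have hins := hJ.2.2 (insert x (suppSys (P₀.B i) ∩ Amin))
          (Finset.insert_subset hx Finset.inter_subset_right) hindep
          (hJeq ▸ Finset.subset_insert x _)
        rw [hJeq] at hins
        rw [← hins]
        exact Finset.mem_insert_self _ _
      exact (mem_suppSys.mp (Finset.mem_inter.mp hxmem).1) hx0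
    have hRG : R ⊆ suppSys T ∧ ∑ j ∈ R, T j = l + m * r R := by
      constructor
      · intro x hx
        obtain ⟨hxA, L, hL⟩ := Finset.mem_filter.mp hx
        rw [mem_suppSys]
        intro hTx
        have hpt := P₀.pt x
        cases L with
        | nil =>
          have hlx : P₀.lst x ≠ 0 := hL.2
          omega
        | cons y L' =>
          obtain ⟨⟨⟨i, hBx, _, _⟩, _⟩, _⟩ := hL
          have hle : P₀.B i x ≤ ∑ i', P₀.B i' x :=
            Finset.single_le_sum (f := fun i' => P₀.B i' x)
              (fun _ _ => Nat.zero_le _) (Finset.mem_univ i)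
          omega
      · have hsplit := P₀.sum_split R
        have hlstR_eq : ∑ j ∈ R, P₀.lst j = l :=
          (Finset.sum_subset (Finset.subset_univ R) (fun x _ hx => by
            by_contra hc
            exact hx (hlstR x hc))).trans P₀.hlst
        have hcards : ∀ i, (suppSys (P₀.B i) ∩ R).card = r R := by
          intro i
          refine hr R (suppSys (P₀.B i) ∩ R) ⟨Finset.inter_subset_right,
            M.subset_closed (P₀.hB i).1 Finset.inter_subset_left, ?_⟩
          intro J hJR hJind hsubJ
          by_contra hne
          obtain ⟨x, hxJ, hxI⟩ := Finset.exists_of_ssubset (lt_of_le_of_ne hsubJ (Ne.symm hne))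
          have hxR : x ∈ R := hJR hxJ
          have hxA : x ∈ Amin := (Finset.mem_filter.mp hxR).1
          have hxB : P₀.B i x = 0 := by
            by_contra hc
            exact hxI (Finset.mem_inter.mpr ⟨mem_suppSys.mpr hc, hxR⟩)
          have hdep := hmaxA i x hxA hxB
          obtain ⟨C, hCsub, hC⟩ := M.exists_circuit hdep
          have hxsupp : x ∉ suppSys (P₀.B i) := fun h => (mem_suppSys.mp h) hxB
          have hCR : C ⊆ insert x (suppSys (P₀.B i) ∩ R) := by
            intro y hy
            by_cases hyx : y = x
            · exact hyx ▸ Finset.mem_insert_self _ _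
            · have hyA : y ∈ suppSys (P₀.B i) ∩ Amin := by
                rcases Finset.mem_insert.mp (hCsub hy) with h | h
                · exact absurd h hyx
                · exact h
              have hyI : y ∈ suppSys (P₀.B i) := (Finset.mem_inter.mp hyA).1
              have harc : Arc P₀ y x := ⟨i, mem_suppSys.mp hyI, hxB,
                M.indep_insert_erase r hr (P₀.hB i).1 hxsupp hC
                  (hCsub.trans (Finset.insert_subset_insert x Finset.inter_subset_left))
                  hy hyx⟩
              obtain ⟨L, hL⟩ := (Finset.mem_filter.mp hxR).2
              have hch : ChainTo P₀ y (x :: L) := ⟨⟨harc, hL.1⟩, by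
                rw [List.getLastD_cons]; exact hL.2⟩
              exact Finset.mem_insert_of_mem (Finset.mem_inter.mpr ⟨hyI,
                Finset.mem_filter.mpr ⟨(Finset.mem_inter.mp hyA).2, ⟨x :: L, hch⟩⟩⟩)
          have hCJ : C ⊆ J := hCR.trans (Finset.insert_subset hxJ hsubJ)
          exact hC.1 (M.subset_closed hJind hCJ)
        have hsum_eq : (∑ i, (suppSys (P₀.B i) ∩ R).card) = m * r R := by
          calc (∑ i, (suppSys (P₀.B i) ∩ R).card) = ∑ _i : Fin m, r R :=
            Finset.sum_congr rfl (fun i _ => hcards i)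
          _ = m * r R := by simp [Finset.sum_const, mul_comm]
        omega
    have hsubR : Amin ⊆ R := hmin R (Set.mem_setOf_eq ▸ hRG)
    obtain ⟨L, hL⟩ := (Finset.mem_filter.mp (hsubR hb)).2
    obtain ⟨Q, hQ⟩ := chain_gives_decomp r hr L.length P₀ b L hL le_rfl
    exact ⟨Q.lst, Q.hlst, ⟨Q.B, Q.hB, Q.hsum⟩, hQ⟩
  · -- any decomposition has its tail supported inside Amin
    rintro ⟨last, hlast, ⟨B, hB, hsum⟩, hbne⟩
    by_contra hbA
    exact hbne ((key ⟨B, last, hB, hlast, hsum⟩).1 b hbA)
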